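/- arXiv:1604.02188 — 2 statements merged into one kernel-verified Lean document; each statement's English description precedes it below -/
import Mathlib

section
/- For every assignment p*_1, …, p*_k ∈ P, one has Σ_{i=1}^k dist(p̂_i, p*_i) + Σ_{{i,j}∈E} dist(p*_i, p*_j) ≤ 2 · (Σ_{i=1}^k dist(q_i, p*_i) + Σ_{{i,j}∈E} dist(p*_i, p*_j)). That is, replacing each query q_i by its nearest label p̂_i in the nearest-neighbor term of the SNN cost at most doubles the cost. -/
open Finset

/-- The symmetric pairwise-distance function induced on unordered pairs by an
assignment `p : V → X`. -/
noncomputable def pairDist {V X : Type*} [MetricSpace X] (p : V → X) : Sym2 V → ℝ :=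
  Sym2.lift ⟨fun i j => dist (p i) (p j), fun i j => dist_comm (p i) (p j)⟩

theorem dist_le_two_mul_dist_of_dist_le {X : Type*} [PseudoMetricSpace X] {q a b : X}
    (h : dist q a ≤ dist q b) : dist a b ≤ 2 * dist q b :=
  calc dist a b ≤ dist a q + dist q b := dist_triangle a q b
    _ ≤ 2 * dist q b := by rw [dist_comm a q]; linarith

theorem pairDist_nonneg {V X : Type*} [MetricSpace X] (p : V → X) (e : Sym2 V) :
    0 ≤ pairDist p e := by
  induction e using Sym2.ind with
  | _ i j => exact dist_nonneg

theorem nn_replacement_doubles_cost_general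
    {X : Type*} [MetricSpace X] {k : ℕ}
    (P : Finset X)
    (q : Fin k → X) (G : SimpleGraph (Fin k)) [Fintype G.edgeSet]
    (phat : Fin k → X)
    (hphatNN : ∀ i, ∀ pt ∈ P, dist (q i) (phat i) ≤ dist (q i) pt)
    (ps : Fin k → X) (hpsP : ∀ i, ps i ∈ P) :
    ∑ i, dist (phat i) (ps i) + ∑ e ∈ G.edgeFinset, pairDist ps e ≤
      2 * (∑ i, dist (q i) (ps i) + ∑ e ∈ G.edgeFinset, pairDist ps e) := by
  have hlabels : ∑ i, dist (phat i) (ps i) ≤ 2 * ∑ i, dist (q i) (ps i) := by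
    rw [mul_sum]
    exact sum_le_sum fun i _ => dist_le_two_mul_dist_of_dist_le (hphatNN i (ps i) (hpsP i))
  have hedges : 0 ≤ ∑ e ∈ G.edgeFinset, pairDist ps e :=
    sum_nonneg fun e _ => pairDist_nonneg ps e
  linarith

/-- replacing each query `q_i` by its nearest label `p̂_i` in the nearest-neighbor
term of the SNN cost at most doubles the cost of any assignment `p*` with values in `P`. -/
theorem nn_replacement_doubles_cost
    {X : Type*} [MetricSpace X] {k : ℕ} (hk : 1 ≤ k)
    (P : Finset X) (hPne : P.Nonempty)
    (q : Fin k → X) (G : SimpleGraph (Fin k)) [Fintype G.edgeSet]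
    (phat : Fin k → X) (hphatP : ∀ i, phat i ∈ P)
    (hphatNN : ∀ i, ∀ pt ∈ P, dist (q i) (phat i) ≤ dist (q i) pt)
    (ps : Fin k → X) (hpsP : ∀ i, ps i ∈ P) :
    ∑ i, dist (phat i) (ps i) + ∑ e ∈ G.edgeFinset, pairDist ps e ≤
      2 * (∑ i, dist (q i) (ps i) + ∑ e ∈ G.edgeFinset, pairDist ps e) :=
  nn_replacement_doubles_cost_general P q G phat hphatNN ps hpsP
end

section
/- Suppose G is r-sparse, witnessed by a map f assigning each edge to an endpoint with at most r edges per vertex; write C(j) = f⁻¹(j). For each i, let p_i ∈ P be a point minimizing p ↦ dist(q_i, p) + Σ_{j : {i,j} ∈ C(j)} dist(p, q_j)/(r+1) over p ∈ P. Then for every assignment p*_1, …, p*_k ∈ P, Σ_{i=1}^k dist(q_i, p_i) + Σ_{{i,j}∈E} dist(p_i, p_j) ≤ (2r+1) · (Σ_{i=1}^k dist(q_i, p*_i) + Σ_{{i,j}∈E} dist(p*_i, p*_j)). That is, this assignment is a (2r+1)-approximation to the optimal SNN assignment. -/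
/-!
Orient every edge `{i, j}` towards the endpoint `j = f {i, j}` it is charged to. The triangle
inequality through `q j` compares the edge cost `dist (u i) (u j)` with `dist (u i) (q j)` up to
`dist (q j) (u j)`, and each `j` is charged at most `r` times. Hence the SNN cost of any assignment
`u` lies between `(r + 1) A(u) / (2r + 1)` and `(r + 1) A(u)`, where `A(u) = ∑ i, A_i (u i)` is the
total aggregate cost, which `p` minimizes coordinatewise. So
`Cost(p) ≤ (r + 1) A(p) ≤ (r + 1) A(p*) ≤ (2r + 1) Cost(p*)`.
-/

open Finset

theorem sum_comp_le_nsmul_sum_of_card_fiber_le {α β M : Type*} [Fintype β] [DecidableEq β]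
    [AddCommMonoid M] [PartialOrder M] [IsOrderedAddMonoid M]
    (s : Finset α) (φ : α → β) {r : ℕ} (hφ : ∀ b, #{a ∈ s | φ a = b} ≤ r)
    {g : β → M} (hg : ∀ b, 0 ≤ g b) :
    ∑ a ∈ s, g (φ a) ≤ r • ∑ b, g b := by
  rw [← sum_fiberwise s φ (fun a => g (φ a)), smul_sum]
  refine sum_le_sum fun b _ => ?_
  calc ∑ a ∈ s with φ a = b, g (φ a) = #{a ∈ s | φ a = b} • g b := by
        rw [sum_congr rfl fun a ha => by rw [(mem_filter.mp ha).2], sum_const]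
    _ ≤ r • g b := nsmul_le_nsmul_left (hg b) (hφ b)

section ChargedArcs

variable {V : Type*} [Fintype V] [DecidableEq V] (G : SimpleGraph V) [DecidableRel G.Adj]
  (f : Sym2 V → V)

/-- `(i, j)` is a charged arc iff `{i, j} ∈ C(j)`. -/
def chargedArcs : Finset (V × V) := {ij | G.Adj ij.1 ij.2 ∧ f s(ij.1, ij.2) = ij.2}

def chargedNbrs (i : V) : Finset V := {j | G.Adj i j ∧ f s(i, j) = j}

variable {G f}

theorem mem_chargedArcs {ij : V × V} :
    ij ∈ chargedArcs G f ↔ G.Adj ij.1 ij.2 ∧ f s(ij.1, ij.2) = ij.2 := by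
  simp [chargedArcs]

theorem injOn_mk_chargedArcs :
    Set.InjOn (fun ij : V × V => s(ij.1, ij.2)) (chargedArcs G f : Set (V × V)) := by
  rintro ⟨a, b⟩ hab ⟨c, d⟩ hcd he
  simp only [mem_coe, mem_chargedArcs] at hab hcd
  have hbd : b = d := hab.2.symm.trans ((congrArg f he).trans hcd.2)
  rcases Sym2.eq_iff.mp he with ⟨rfl, rfl⟩ | ⟨rfl, rfl⟩
  · rfl
  · exact absurd hbd hab.1.ne.symm

theorem sum_chargedArcs_eq_sum_sum_chargedNbrs {M : Type*} [AddCommMonoid M] (F : V → V → M) :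
    ∑ ij ∈ chargedArcs G f, F ij.1 ij.2 = ∑ i, ∑ j ∈ chargedNbrs G f i, F i j := by
  simp only [chargedArcs, chargedNbrs, sum_filter, Fintype.sum_prod_type]

variable [Fintype G.edgeSet]

theorem image_mk_chargedArcs (hf : ∀ e ∈ G.edgeSet, f e ∈ e) :
    (chargedArcs G f).image (fun ij => s(ij.1, ij.2)) = G.edgeFinset := by
  ext e
  induction e using Sym2.ind with | _ a b => ?_
  simp only [mem_image, SimpleGraph.mem_edgeFinset]
  constructor
  · rintro ⟨⟨c, d⟩, h, he⟩
    rw [← he]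
    exact (mem_chargedArcs.mp h).1
  · intro he
    have hab := G.mem_edgeSet.mp he
    rcases Sym2.mem_iff.mp (hf s(a, b) he) with h | h
    · exact ⟨(b, a), mem_chargedArcs.mpr ⟨hab.symm, by rwa [Sym2.eq_swap]⟩, Sym2.eq_swap⟩
    · exact ⟨(a, b), mem_chargedArcs.mpr ⟨hab, h⟩, rfl⟩

theorem sum_edgeFinset_eq_sum_chargedArcs {M : Type*} [AddCommMonoid M]
    (hf : ∀ e ∈ G.edgeSet, f e ∈ e) (H : Sym2 V → M) :
    ∑ e ∈ G.edgeFinset, H e = ∑ ij ∈ chargedArcs G f, H s(ij.1, ij.2) := by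
  rw [← image_mk_chargedArcs hf, sum_image injOn_mk_chargedArcs]

theorem sum_chargedArcs_snd_le_nsmul {M : Type*} [AddCommMonoid M] [PartialOrder M]
    [IsOrderedAddMonoid M] {r : ℕ} (hf : ∀ e ∈ G.edgeSet, f e ∈ e)
    (hsparse : ∀ v, #{e ∈ G.edgeFinset | f e = v} ≤ r) {g : V → M} (hg : ∀ v, 0 ≤ g v) :
    ∑ ij ∈ chargedArcs G f, g ij.2 ≤ r • ∑ v, g v :=
  calc ∑ ij ∈ chargedArcs G f, g ij.2 = ∑ e ∈ G.edgeFinset, g (f e) := by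
        rw [sum_edgeFinset_eq_sum_chargedArcs hf]
        exact sum_congr rfl fun ij hij => by rw [(mem_chargedArcs.mp hij).2]
    _ ≤ r • ∑ v, g v := sum_comp_le_nsmul_sum_of_card_fiber_le _ _ hsparse hg

end ChargedArcs

section SNN

variable {V X : Type*} [Fintype V] [DecidableEq V] [MetricSpace X]
  (G : SimpleGraph V) [DecidableRel G.Adj] (f : Sym2 V → V) (q : V → X) (r : ℕ)

noncomputable def aggregateCost (i : V) (x : X) : ℝ :=
  dist (q i) x + ∑ j ∈ chargedNbrs G f i, dist x (q j) / ((r : ℝ) + 1)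

variable {G f}

theorem succ_mul_sum_aggregateCost (u : V → X) :
    ((r : ℝ) + 1) * ∑ i, aggregateCost G f q r i (u i) =
      ((r : ℝ) + 1) * ∑ i, dist (q i) (u i) + ∑ ij ∈ chargedArcs G f, dist (u ij.1) (q ij.2) := by
  have hr : ((r : ℝ) + 1) ≠ 0 := by positivity
  simp only [aggregateCost, sum_add_distrib, mul_add, ← sum_div, mul_sum (s := univ),
    mul_div_cancel₀ _ hr, sum_chargedArcs_eq_sum_sum_chargedNbrs (fun i j => dist (u i) (q j))]

variable (G) [Fintype G.edgeSet]

noncomputable def snnCost (p : V → X) : ℝ :=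
  ∑ i, dist (q i) (p i) + ∑ e ∈ G.edgeFinset, pairDist p e

variable {G}

theorem sum_chargedArcs_dist_le (hf : ∀ e ∈ G.edgeSet, f e ∈ e)
    (hsparse : ∀ v, #{e ∈ G.edgeFinset | f e = v} ≤ r) (u : V → X) :
    ∑ ij ∈ chargedArcs G f, dist (q ij.2) (u ij.2) ≤ r * ∑ j, dist (q j) (u j) := by
  rw [← nsmul_eq_mul]
  exact sum_chargedArcs_snd_le_nsmul hf hsparse fun _ => dist_nonneg

theorem snnCost_le_succ_mul_sum_aggregateCost (hf : ∀ e ∈ G.edgeSet, f e ∈ e)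
    (hsparse : ∀ v, #{e ∈ G.edgeFinset | f e = v} ≤ r) (u : V → X) :
    snnCost G q u ≤ ((r : ℝ) + 1) * ∑ i, aggregateCost G f q r i (u i) := by
  have hedge : ∑ e ∈ G.edgeFinset, pairDist u e ≤
      ∑ ij ∈ chargedArcs G f, dist (u ij.1) (q ij.2) +
        ∑ ij ∈ chargedArcs G f, dist (q ij.2) (u ij.2) := by
    rw [sum_edgeFinset_eq_sum_chargedArcs hf, ← sum_add_distrib]
    exact sum_le_sum fun ij _ => dist_triangle _ _ _
  rw [snnCost, succ_mul_sum_aggregateCost]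
  linarith [sum_chargedArcs_dist_le q r hf hsparse u]

theorem succ_mul_sum_aggregateCost_le_snnCost (hf : ∀ e ∈ G.edgeSet, f e ∈ e)
    (hsparse : ∀ v, #{e ∈ G.edgeFinset | f e = v} ≤ r) (u : V → X) :
    ((r : ℝ) + 1) * ∑ i, aggregateCost G f q r i (u i) ≤ (2 * (r : ℝ) + 1) * snnCost G q u := by
  have harcs : ∑ ij ∈ chargedArcs G f, dist (u ij.1) (q ij.2) ≤
      ∑ e ∈ G.edgeFinset, pairDist u e + ∑ ij ∈ chargedArcs G f, dist (q ij.2) (u ij.2) := by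
    rw [sum_edgeFinset_eq_sum_chargedArcs hf, ← sum_add_distrib]
    exact sum_le_sum fun ij _ => dist_triangle_right _ _ _
  have hedges : 0 ≤ ∑ e ∈ G.edgeFinset, pairDist u e := by
    rw [sum_edgeFinset_eq_sum_chargedArcs hf]
    exact sum_nonneg fun _ _ => dist_nonneg
  rw [snnCost, succ_mul_sum_aggregateCost]
  linarith [sum_chargedArcs_dist_le q r hf hsparse u, mul_nonneg r.cast_nonneg hedges]

end SNN

theorem aggregate_nn_approximation_general
    {X : Type*} [MetricSpace X] {k : ℕ}
    (P : Finset X)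
    (q : Fin k → X) (G : SimpleGraph (Fin k)) [DecidableRel G.Adj] [Fintype G.edgeSet]
    (r : ℕ) (f : Sym2 (Fin k) → Fin k)
    (hfEnd : ∀ e ∈ G.edgeSet, f e ∈ e)
    (hfSparse : ∀ v : Fin k, (G.edgeFinset.filter (fun e => f e = v)).card ≤ r)
    (p : Fin k → X)
    (hmin : ∀ i, ∀ p' ∈ P,
      dist (q i) (p i) +
          ∑ j ∈ Finset.univ.filter (fun j => G.Adj i j ∧ f s(i, j) = j),
            dist (p i) (q j) / ((r : ℝ) + 1) ≤
        dist (q i) p' +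
          ∑ j ∈ Finset.univ.filter (fun j => G.Adj i j ∧ f s(i, j) = j),
            dist p' (q j) / ((r : ℝ) + 1))
    (ps : Fin k → X) (hpsP : ∀ i, ps i ∈ P) :
    ∑ i, dist (q i) (p i) + ∑ e ∈ G.edgeFinset, pairDist p e ≤
      (2 * (r : ℝ) + 1) *
        (∑ i, dist (q i) (ps i) + ∑ e ∈ G.edgeFinset, pairDist ps e) := by
  have hopt : ∑ i, aggregateCost G f q r i (p i) ≤ ∑ i, aggregateCost G f q r i (ps i) :=
    sum_le_sum fun i _ => hmin i (ps i) (hpsP i)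
  calc snnCost G q p ≤ ((r : ℝ) + 1) * ∑ i, aggregateCost G f q r i (p i) :=
        snnCost_le_succ_mul_sum_aggregateCost q r hfEnd hfSparse p
    _ ≤ ((r : ℝ) + 1) * ∑ i, aggregateCost G f q r i (ps i) := by gcongr
    _ ≤ (2 * (r : ℝ) + 1) * snnCost G q ps :=
        succ_mul_sum_aggregateCost_le_snnCost q r hfEnd hfSparse ps

/-- suppose `G` is `r`-sparse, witnessed by `f` assigning each edge to an
endpoint with at most `r` edges per vertex, and for each `i` the label `p_i ∈ P` minimizes
`p ↦ dist(q_i, p) + Σ_{j : {i,j} ∈ C(j)} dist(p, q_j)/(r+1)` over `P` (where `C(j) = f⁻¹(j)`).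
Then `p` is a `(2r+1)`-approximation: its SNN cost is at most `(2r+1)` times the SNN cost of
any assignment `p*` with values in `P`. -/
theorem aggregate_nn_approximation
    {X : Type*} [MetricSpace X] {k : ℕ} (hk : 1 ≤ k)
    (P : Finset X) (hPne : P.Nonempty)
    (q : Fin k → X) (G : SimpleGraph (Fin k)) [DecidableRel G.Adj] [Fintype G.edgeSet]
    (r : ℕ) (f : Sym2 (Fin k) → Fin k)
    (hfEnd : ∀ e ∈ G.edgeSet, f e ∈ e)
    (hfSparse : ∀ v : Fin k, (G.edgeFinset.filter (fun e => f e = v)).card ≤ r)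
    (p : Fin k → X) (hpP : ∀ i, p i ∈ P)
    (hmin : ∀ i, ∀ p' ∈ P,
      dist (q i) (p i) +
          ∑ j ∈ Finset.univ.filter (fun j => G.Adj i j ∧ f s(i, j) = j),
            dist (p i) (q j) / ((r : ℝ) + 1) ≤
        dist (q i) p' +
          ∑ j ∈ Finset.univ.filter (fun j => G.Adj i j ∧ f s(i, j) = j),
            dist p' (q j) / ((r : ℝ) + 1))
    (ps : Fin k → X) (hpsP : ∀ i, ps i ∈ P) :
    ∑ i, dist (q i) (p i) + ∑ e ∈ G.edgeFinset, pairDist p e ≤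
      (2 * (r : ℝ) + 1) *
        (∑ i, dist (q i) (ps i) + ∑ e ∈ G.edgeFinset, pairDist ps e) :=
  aggregate_nn_approximation_general P q G r f hfEnd hfSparse p hmin ps hpsP
end
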